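/- arXiv:1410.7765 — 2 statements merged into one kernel-verified Lean document; each statement's English description precedes it below -/
import Mathlib

section
/- Let y : [a,b] → ℂ be continuously differentiable with y(a) = y(b) = 0. Then ∫_a^b |y(x)|² dx ≤ ((b-a)/π)² ∫_a^b |y'(x)|² dx. -/
/-!
Extend `y` to `[2a - b, b]` by `Y (x) = -y (2a - x)` for `x ≤ a`. Then `Y` is continuous, vanishes
at both ends, has mean zero, its derivative is the even extension of `y'`, and both `∫ ‖Y‖²` and
`∫ ‖Y'‖²` are twice the original integrals. For a function on an interval of length `L` with equal
endpoint values and mean zero, Parseval's identity together with `c_n(Y) = L / (2πin) · c_n(Y')`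
for `n ≠ 0` and `c_0(Y) = 0` gives `∫ ‖Y‖² ≤ (L / 2π)² ∫ ‖Y'‖²`; here `L = 2(b - a)`.
-/

open intervalIntegral MeasureTheory Set Complex
open scoped Real Interval

lemma ContinuousOn.memLp_restrict_Ioc {E : Type*} [NormedAddCommGroup E] {f : ℝ → E} {a b : ℝ}
    (hf : ContinuousOn f (Icc a b)) (p : ENNReal) : MemLp f p (volume.restrict (Ioc a b)) := by
  obtain ⟨C, hC⟩ := isCompact_Icc.exists_bound_of_continuousOn hf
  have hIcc : MemLp f p (volume.restrict (Icc a b)) :=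
    .of_bound (hf.aestronglyMeasurable measurableSet_Icc) C
      (ae_restrict_of_forall_mem measurableSet_Icc hC)
  exact hIcc.mono_measure (Measure.restrict_mono Ioc_subset_Icc_self le_rfl)

lemma norm_fourierCoeffOn_le_of_hasDeriv_right {a b : ℝ} (hab : a < b) {f f' : ℝ → ℂ}
    (hf : ContinuousOn f (Icc a b))
    (hff' : ∀ x ∈ Ioo a b, HasDerivWithinAt f (f' x) (Ioi x) x)
    (hf' : IntervalIntegrable f' volume a b) (hper : f a = f b)
    (hmean : ∫ x in a..b, f x = 0) (n : ℤ) :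
    ‖fourierCoeffOn hab f n‖ ≤ (b - a) / (2 * π) * ‖fourierCoeffOn hab f' n‖ := by
  have hba : 0 < b - a := sub_pos.2 hab
  rcases eq_or_ne n 0 with rfl | hn
  · simp only [fourierCoeffOn_eq_integral, neg_zero, fourier_zero, one_smul, hmean, smul_zero,
      norm_zero]
    positivity
  have hcoeff :
      fourierCoeffOn hab f n = (b - a : ℝ) / (2 * π * I * n) * fourierCoeffOn hab f' n := by
    rw [fourierCoeffOn_of_hasDeriv_right hab hn (by rwa [uIcc_of_le hab.le])
      (by simpa only [min_eq_left hab.le, max_eq_right hab.le] using hff') hf', hper, sub_self,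
      mul_zero, zero_sub]
    push_cast
    field_simp
  have hn1 : (1 : ℝ) ≤ |(n : ℝ)| := by exact_mod_cast Int.one_le_abs hn
  rw [hcoeff, norm_mul]
  gcongr
  rw [norm_div, norm_real, Real.norm_of_nonneg hba.le, norm_mul, norm_mul, norm_mul, norm_I,
    norm_real, Real.norm_of_nonneg Real.pi_pos.le, norm_intCast, Complex.norm_two, mul_one]
  exact div_le_div_of_nonneg_left hba.le (by positivity)
    (le_mul_of_one_le_right (by positivity) hn1)

theorem wirtinger_inequality_periodic {a b : ℝ} (hab : a < b) {f f' : ℝ → ℂ}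
    (hf : ContinuousOn f (Icc a b))
    (hff' : ∀ x ∈ Ioo a b, HasDerivWithinAt f (f' x) (Ioi x) x)
    (hf' : MemLp f' 2 (volume.restrict (Ioc a b))) (hper : f a = f b)
    (hmean : ∫ x in a..b, f x = 0) :
    ∫ x in a..b, ‖f x‖ ^ 2 ≤ ((b - a) / (2 * π)) ^ 2 * ∫ x in a..b, ‖f' x‖ ^ 2 := by
  have hf'int : IntervalIntegrable f' volume a b :=
    (intervalIntegrable_iff_integrableOn_Ioc_of_le hab.le).2 (hf'.integrable one_le_two)
  have hcoeff (n : ℤ) : ‖fourierCoeffOn hab f n‖ ^ 2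
      ≤ ((b - a) / (2 * π)) ^ 2 * ‖fourierCoeffOn hab f' n‖ ^ 2 := by
    rw [← mul_pow]
    gcongr
    exact norm_fourierCoeffOn_le_of_hasDeriv_right hab hf hff' hf'int hper hmean n
  have hparseval := hasSum_le hcoeff (hasSum_sq_fourierCoeffOn hab (hf.memLp_restrict_Ioc 2))
    ((hasSum_sq_fourierCoeffOn hab hf').mul_left _)
  rw [smul_eq_mul, smul_eq_mul, mul_left_comm] at hparseval
  exact le_of_mul_le_mul_left hparseval (inv_pos.2 (sub_pos.2 hab))

section glueReflect

variable {E F : Type*}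

noncomputable def glueReflect (a : ℝ) (g h : ℝ → E) (x : ℝ) : E :=
  if x ≤ a then g (2 * a - x) else h x

lemma apply_glueReflect (φ : E → F) (a : ℝ) (g h : ℝ → E) (x : ℝ) :
    φ (glueReflect a g h x) = glueReflect a (fun t => φ (g t)) (fun t => φ (h t)) x :=
  apply_ite φ _ _ _

lemma glueReflect_of_le {a x : ℝ} {g h : ℝ → E} (hgh : g a = h a) (hx : a ≤ x) :
    glueReflect a g h x = h x := by
  rw [glueReflect]
  split_ifs with hxa
  · rw [le_antisymm hxa hx, two_mul, add_sub_cancel_right, hgh]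
  · rfl

lemma continuousOn_glueReflect [TopologicalSpace E] {a b : ℝ} {g h : ℝ → E}
    (hg : ContinuousOn g (Icc a b)) (hh : ContinuousOn h (Icc a b)) (hgh : g a = h a) :
    ContinuousOn (glueReflect a g h) (Icc (2 * a - b) b) := by
  have hleft : ContinuousOn (glueReflect a g h) (Icc (2 * a - b) a) := by
    refine (hg.comp (continuousOn_const.sub continuousOn_id) fun x hx => ?_).congr
      fun x hx => if_pos hx.2
    exact show 2 * a - x ∈ Icc a b from ⟨by linarith [hx.2], by linarith [hx.1]⟩
  have hright : ContinuousOn (glueReflect a g h) (Icc a b) :=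
    hh.congr fun x hx => glueReflect_of_le hgh hx.1
  exact (hleft.union_of_isClosed hright isClosed_Icc isClosed_Icc).mono Icc_subset_Icc_union_Icc

lemma integral_glueReflect [NormedAddCommGroup E] [NormedSpace ℝ E] {a b : ℝ} (hab : a ≤ b)
    {g h : ℝ → E} (hg : IntervalIntegrable g volume a b) (hh : IntervalIntegrable h volume a b) :
    ∫ x in (2 * a - b)..b, glueReflect a g h x = (∫ x in a..b, g x) + ∫ x in a..b, h x := by
  have hleft : EqOn (glueReflect a g h) (fun x => g (2 * a - x)) (Ι (2 * a - b) a) := by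
    intro x hx
    rw [uIoc_of_le (by linarith)] at hx
    exact if_pos hx.2
  have hright : EqOn (glueReflect a g h) h (Ι a b) := by
    intro x hx
    rw [uIoc_of_le hab] at hx
    exact if_neg (not_le.2 hx.1)
  have hg' : IntervalIntegrable (fun x => g (2 * a - x)) volume (2 * a - b) a := by
    simpa only [two_mul, add_sub_cancel_right] using (hg.comp_sub_left (2 * a)).symm
  rw [← integral_add_adjacent_intervals ((intervalIntegrable_congr hleft).2 hg')
      ((intervalIntegrable_congr hright).2 hh), integral_congr_ae (ae_of_all _ hleft),
    integral_congr_ae (ae_of_all _ hright), integral_comp_sub_left, two_mul, add_sub_cancel_right,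
    sub_sub_cancel]

lemma hasDerivWithinAt_glueReflect_neg [NormedAddCommGroup E] [NormedSpace ℝ E] {a b : ℝ}
    {y y' : ℝ → E} (hy : ∀ x ∈ Icc a b, HasDerivAt y (y' x) x) (ha : y a = 0) {x : ℝ}
    (hx : x ∈ Ioo (2 * a - b) b) :
    HasDerivWithinAt (glueReflect a (-y) y) (glueReflect a y' y' x) (Ioi x) x := by
  rcases lt_or_ge x a with hxa | hxa
  · have hrefl : HasDerivAt (fun t => (-y) (2 * a - t)) (y' (2 * a - x)) x := by
      simpa only [neg_neg] using
        ((hy (2 * a - x) ⟨by linarith, by linarith [hx.1]⟩).neg.comp_const_sub (2 * a) x)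
    have heq : glueReflect a (-y) y =ᶠ[nhds x] fun t => (-y) (2 * a - t) := by
      filter_upwards [Iic_mem_nhds hxa] with t ht
      exact if_pos ht
    rw [glueReflect, if_pos hxa.le]
    exact (hrefl.congr_of_eventuallyEq heq).hasDerivWithinAt
  · rw [glueReflect_of_le rfl hxa]
    exact (hy x ⟨hxa, hx.2.le⟩).hasDerivWithinAt.congr
      (fun t ht => if_neg (not_le.2 (hxa.trans_lt ht))) (glueReflect_of_le (by simp [ha]) hxa)

end glueReflect

/-- Wirtinger-type inequality for complex-valued functions vanishing at both endpoints. -/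
theorem wirtinger_inequality (a b : ℝ) (hab : a < b) (y y' : ℝ → ℂ)
    (hderiv : ∀ x ∈ Set.Icc a b, HasDerivAt y (y' x) x)
    (hcont : ContinuousOn y' (Set.Icc a b))
    (ha : y a = 0) (hb : y b = 0) :
    ∫ x in a..b, ‖y x‖ ^ 2 ≤ ((b - a) / Real.pi) ^ 2 * ∫ x in a..b, ‖y' x‖ ^ 2 := by
  have hy : ContinuousOn y (Icc a b) := fun x hx => (hderiv x hx).continuousAt.continuousWithinAt
  have hsq {g h : ℝ → ℂ} (hg : ContinuousOn g (Icc a b)) (hh : ContinuousOn h (Icc a b)) :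
      ∫ x in (2 * a - b)..b, ‖glueReflect a g h x‖ ^ 2
        = (∫ x in a..b, ‖g x‖ ^ 2) + ∫ x in a..b, ‖h x‖ ^ 2 := by
    simp only [apply_glueReflect (‖·‖ ^ 2)]
    exact integral_glueReflect hab.le ((hg.norm.pow 2).intervalIntegrable_of_Icc hab.le)
      ((hh.norm.pow 2).intervalIntegrable_of_Icc hab.le)
  have hends : glueReflect a (-y) y (2 * a - b) = glueReflect a (-y) y b := by
    rw [glueReflect, glueReflect, if_pos (by linarith), if_neg (by linarith)]
    simp [hb]
  have hmean : ∫ x in (2 * a - b)..b, glueReflect a (-y) y x = 0 := by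
    rw [integral_glueReflect hab.le (hy.neg.intervalIntegrable_of_Icc hab.le)
      (hy.intervalIntegrable_of_Icc hab.le)]
    simp
  have key := wirtinger_inequality_periodic (by linarith : 2 * a - b < b)
    (continuousOn_glueReflect hy.neg hy (by simp [ha]))
    (fun x hx => hasDerivWithinAt_glueReflect_neg hderiv ha hx)
    ((continuousOn_glueReflect hcont hcont rfl).memLp_restrict_Ioc 2) hends hmean
  rw [hsq hy.neg hy, hsq hcont hcont] at key
  simp only [Pi.neg_apply, norm_neg] at key
  have hlength : (b - (2 * a - b)) / (2 * π) = (b - a) / π := by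
    field_simp
    ring
  rw [hlength] at key
  linarith
end

section
/- The functions h(u) = (sin(πu)/(πu))² · 1/(1−u²) and ĥ(α) = max(1 − |α| + sin(2π|α|)/(2π), 0) form a Fourier transform pair: ĥ(α) = ∫_{−∞}^{∞} h(u) e^{2πiαu} du. -/
/-!
`ĥ` is continuous, even and supported in `[-1, 1]`, so for `u ≠ 0, ±1` its Fourier transform is
the elementary integral `∫₀¹ 2 ĥ(v) cos (2πuv) dv`, which an explicit antiderivative evaluates to
`h(u)`. The bound `|h(u)| ≤ 4 / (1 + u²)` makes `h = 𝓕 ĥ` integrable, and Fourier inversion at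
`α` gives the claim.
-/

open Real MeasureTheory Set Function FourierTransform

noncomputable def selbergMinorant (u : ℝ) : ℝ :=
  (sin (π * u) / (π * u)) ^ 2 * (1 / (1 - u ^ 2))

noncomputable def selbergMinorantHat (α : ℝ) : ℝ :=
  max (1 - |α| + sin (2 * π * |α|) / (2 * π)) 0

/-- As `x - sin x` has the sign of `x`, the left-hand side has the sign of `1 - t`. -/
lemma one_sub_add_sin_two_pi_mul_div (t : ℝ) :
    1 - t + sin (2 * π * t) / (2 * π) =
      (2 * π * (1 - t) - sin (2 * π * (1 - t))) / (2 * π) := by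
  rw [mul_one_sub, sin_two_pi_sub]
  field_simp
  ring

lemma selbergMinorantHat_of_abs_le_one {α : ℝ} (h : |α| ≤ 1) :
    selbergMinorantHat α = 1 - |α| + sin (2 * π * |α|) / (2 * π) := by
  refine max_eq_left ?_
  rw [one_sub_add_sin_two_pi_mul_div]
  exact div_nonneg (sub_nonneg.2 (sin_le (by nlinarith [pi_pos]))) (by positivity)

lemma selbergMinorantHat_of_one_le_abs {α : ℝ} (h : 1 ≤ |α|) : selbergMinorantHat α = 0 := by
  refine max_eq_right ?_
  rw [one_sub_add_sin_two_pi_mul_div]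
  have := sin_le (x := -(2 * π * (1 - |α|))) (by nlinarith [pi_pos])
  rw [sin_neg] at this
  exact div_nonpos_of_nonpos_of_nonneg (by linarith) (by positivity)

lemma selbergMinorantHat_neg (α : ℝ) : selbergMinorantHat (-α) = selbergMinorantHat α := by
  rw [selbergMinorantHat, abs_neg, selbergMinorantHat]

lemma continuous_selbergMinorantHat : Continuous selbergMinorantHat := by
  unfold selbergMinorantHat
  fun_prop

lemma support_selbergMinorantHat_subset : support selbergMinorantHat ⊆ Ioo (-1) 1 := by
  intro α hα
  rw [mem_Ioo, ← abs_lt]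
  by_contra h
  exact hα (selbergMinorantHat_of_one_le_abs (not_lt.1 h))

lemma integrable_selbergMinorantHat : Integrable selbergMinorantHat :=
  continuous_selbergMinorantHat.integrable_of_hasCompactSupport <|
    HasCompactSupport.intro isCompact_Icc fun _ hα ↦
      notMem_support.1 fun h ↦ hα (Ioo_subset_Icc_self (support_selbergMinorantHat_subset h))

lemma sin_pi_mul_sq_le (u : ℝ) : sin (π * u) ^ 2 ≤ π ^ 2 * |1 - u ^ 2| := by
  have h₁ : |sin (π * u)| ≤ |π * (1 - u)| := by
    rw [← sin_pi_sub, ← mul_one_sub]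
    exact abs_sin_le_abs
  have h₂ : |sin (π * u)| ≤ |π * (1 + u)| := by
    rw [← abs_neg, ← sin_add_pi, show π * u + π = π * (1 + u) by ring]
    exact abs_sin_le_abs
  calc sin (π * u) ^ 2 = |sin (π * u)| * |sin (π * u)| := by rw [abs_mul_abs_self, sq]
    _ ≤ |π * (1 - u)| * |π * (1 + u)| := mul_le_mul h₁ h₂ (abs_nonneg _) (abs_nonneg _)
    _ = π ^ 2 * |1 - u ^ 2| := by
      rw [← abs_mul, show π * (1 - u) * (π * (1 + u)) = π ^ 2 * (1 - u ^ 2) by ring, abs_mul,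
        abs_of_nonneg (sq_nonneg π)]

lemma abs_selbergMinorant_le (u : ℝ) : |selbergMinorant u| ≤ 4 * (1 + u ^ 2)⁻¹ := by
  have hs₁ : sin (π * u) ^ 2 ≤ π ^ 2 * u ^ 2 := by
    rw [← mul_pow]
    exact sin_sq_le_sq
  have hs₂ := sin_pi_mul_sq_le u
  have hd₁ : 1 - u ^ 2 ≤ |1 - u ^ 2| := le_abs_self _
  have hd₂ : u ^ 2 - 1 ≤ |1 - u ^ 2| := by linarith [neg_abs_le (1 - u ^ 2)]
  -- `hs₁` does the job for `u² ≤ 1/3`, `hs₂` for `u² ≥ 1/3`.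
  have key : sin (π * u) ^ 2 * (1 + u ^ 2) ≤ 4 * (π ^ 2 * u ^ 2 * |1 - u ^ 2|) := by
    rcases le_total (u ^ 2) (1 / 3) with h | h
    · nlinarith [sq_nonneg u, pi_pos]
    · nlinarith [abs_nonneg (1 - u ^ 2)]
  have hrw : |selbergMinorant u| = sin (π * u) ^ 2 / (π ^ 2 * u ^ 2 * |1 - u ^ 2|) := by
    rw [selbergMinorant, abs_mul, div_pow, abs_of_nonneg (by positivity), abs_div, abs_one]
    field_simp
  rw [hrw]
  rcases eq_or_lt_of_le (by positivity : 0 ≤ π ^ 2 * u ^ 2 * |1 - u ^ 2|) with h0 | hpos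
  · rw [← h0, div_zero]
    positivity
  · rw [div_le_iff₀ hpos, ← div_eq_mul_inv, div_mul_eq_mul_div, le_div_iff₀ (by positivity)]
    exact key

lemma integrable_selbergMinorant : Integrable selbergMinorant := by
  refine (integrable_inv_one_add_sq.const_mul 4).mono' ?_ (ae_of_all _ abs_selbergMinorant_le)
  unfold selbergMinorant
  fun_prop

theorem Real.fourier_ofReal_of_even_eq_integral_cos {f : ℝ → ℝ} {a : ℝ} (hf : Continuous f)
    (heven : ∀ x, f (-x) = f x) (hsupp : support f ⊆ Ioo (-a) a) (u : ℝ) :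
    𝓕 (fun x ↦ (f x : ℂ)) u = ((∫ x in 0..a, 2 * f x * cos (2 * π * u * x) : ℝ) : ℂ) := by
  rw [Real.fourier_real_eq_integral_exp_smul]
  set g : ℝ → ℂ := fun x ↦ Complex.exp (↑(-2 * π * x * u) * Complex.I) • (f x : ℂ)
  have hg : Continuous g := by fun_prop
  have hg_neg : Continuous fun x ↦ g (-x) := hg.comp continuous_neg
  have hg_supp : support g ⊆ Ioc (-a) a := by
    refine fun x hx ↦ Ioo_subset_Ioc_self (hsupp fun hfx ↦ hx ?_)
    simp [g, hfx]
  have hfold : ∫ x in -a..0, g x = ∫ x in 0..a, g (-x) := by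
    rw [intervalIntegral.integral_comp_neg, neg_zero]
  have hkernel (x : ℝ) : g (-x) + g x = ((2 * f x * cos (2 * π * u * x) : ℝ) : ℂ) := by
    have h₁ : (↑(-2 * π * -x * u) : ℂ) * Complex.I = ↑(2 * π * u * x) * Complex.I := by
      push_cast; ring
    have h₂ : (↑(-2 * π * x * u) : ℂ) * Complex.I = -↑(2 * π * u * x) * Complex.I := by
      push_cast; ring
    simp only [g, heven]
    rw [h₁, h₂, ← add_smul, ← Complex.two_cos, smul_eq_mul]
    push_cast
    ring
  rw [← intervalIntegral.integral_eq_integral_of_support_subset hg_supp,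
    ← intervalIntegral.integral_add_adjacent_intervals (b := 0) (hg.intervalIntegrable _ _)
      (hg.intervalIntegrable _ _), hfold,
    ← intervalIntegral.integral_add (hg_neg.intervalIntegrable _ _) (hg.intervalIntegrable _ _),
    ← intervalIntegral.integral_ofReal]
  exact intervalIntegral.integral_congr fun x _ ↦ hkernel x

lemma hasDerivAt_selberg_antiderivative {c : ℝ} (hc : c ≠ 0) (hp : 2 * π + c ≠ 0)
    (hm : 2 * π - c ≠ 0) (v : ℝ) :
    HasDerivAt (fun w ↦ 2 * ((1 - w) * sin (c * w) / c - cos (c * w) / c ^ 2) -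
        (cos ((2 * π + c) * w) / (2 * π + c) + cos ((2 * π - c) * w) / (2 * π - c)) / (2 * π))
      (2 * (1 - v + sin (2 * π * v) / (2 * π)) * cos (c * v)) v := by
  have hlin (k : ℝ) : HasDerivAt (fun w ↦ k * w) k v := by
    simpa using (hasDerivAt_id v).const_mul k
  have hderiv := ((((hasDerivAt_id v).const_sub 1).mul (hlin c).sin).div_const c |>.sub
    ((hlin c).cos.div_const (c ^ 2)) |>.const_mul 2).sub
    (((hlin (2 * π + c)).cos.div_const (2 * π + c)).add
      ((hlin (2 * π - c)).cos.div_const (2 * π - c)) |>.div_const (2 * π))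
  refine hderiv.congr_deriv ?_
  rw [show (2 * π + c) * v = 2 * π * v + c * v by ring,
    show (2 * π - c) * v = 2 * π * v - c * v by ring, sin_add, sin_sub, id]
  field_simp
  ring

lemma integral_selberg_profile_mul_cos {c : ℝ} (hc : c ≠ 0) (hp : 2 * π + c ≠ 0)
    (hm : 2 * π - c ≠ 0) :
    ∫ v in (0 : ℝ)..1, 2 * (1 - v + sin (2 * π * v) / (2 * π)) * cos (c * v) =
      8 * π ^ 2 * (1 - cos c) / (c ^ 2 * ((2 * π + c) * (2 * π - c))) := by
  rw [intervalIntegral.integral_eq_sub_of_hasDerivAt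
    (fun v _ ↦ hasDerivAt_selberg_antiderivative hc hp hm v)
    (Continuous.intervalIntegrable (by fun_prop) _ _)]
  have hp' : cos (2 * π + c) = cos c := by rw [add_comm, cos_add_two_pi]
  have hm' : cos (2 * π - c) = cos c := cos_two_pi_sub c
  simp only [mul_one, mul_zero, sin_zero, cos_zero, hp', hm']
  field_simp
  ring

lemma integral_selberg_profile_mul_cos_two_pi_mul {u : ℝ} (hu₀ : u ≠ 0) (hu₁ : u ≠ 1)
    (hu₂ : u ≠ -1) :
    ∫ v in (0 : ℝ)..1, 2 * (1 - v + sin (2 * π * v) / (2 * π)) * cos (2 * π * u * v) =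
      selbergMinorant u := by
  have hplus : 1 + u ≠ 0 := fun h ↦ hu₂ (eq_neg_of_add_eq_zero_right h)
  have hminus : 1 - u ≠ 0 := fun h ↦ hu₁ (sub_eq_zero.1 h).symm
  have hsq : 1 - u ^ 2 ≠ 0 := by
    rw [show 1 - u ^ 2 = (1 - u) * (1 + u) by ring]
    exact mul_ne_zero hminus hplus
  rw [integral_selberg_profile_mul_cos (by positivity)
    (by rw [← mul_one_add]; positivity) (by rw [← mul_one_sub]; positivity),
    show 2 * π * u = 2 * (π * u) by ring, cos_two_mul, cos_sq']
  unfold selbergMinorant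
  field_simp
  ring

lemma fourier_selbergMinorantHat {u : ℝ} (hu₀ : u ≠ 0) (hu₁ : u ≠ 1) (hu₂ : u ≠ -1) :
    𝓕 (fun α ↦ (selbergMinorantHat α : ℂ)) u = selbergMinorant u := by
  rw [Real.fourier_ofReal_of_even_eq_integral_cos continuous_selbergMinorantHat
    selbergMinorantHat_neg support_selbergMinorantHat_subset,
    ← integral_selberg_profile_mul_cos_two_pi_mul hu₀ hu₁ hu₂]
  congr 1
  refine intervalIntegral.integral_congr fun v hv ↦ ?_
  rw [uIcc_of_le zero_le_one] at hv
  have hv' : |v| = v := abs_of_nonneg hv.1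
  simp only [selbergMinorantHat_of_abs_le_one (hv'.le.trans hv.2), hv']

/-- Only almost everywhere: at `u = 0, ±1` the division by zero makes `selbergMinorant u = 0`. -/
lemma fourier_selbergMinorantHat_ae_eq :
    𝓕 (fun α ↦ (selbergMinorantHat α : ℂ)) =ᵐ[volume] fun u ↦ (selbergMinorant u : ℂ) := by
  filter_upwards [compl_mem_ae_iff.2 ((toFinite {0, 1, -1}).measure_zero volume)] with u hu
  simp only [mem_compl_iff, mem_insert_iff, mem_singleton_iff, not_or] at hu
  exact fourier_selbergMinorantHat hu.1 hu.2.1 hu.2.2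

/-- The Selberg minorant `h(u) = (sin(πu)/(πu))² / (1−u²)` and
`ĥ(α) = max(1 − |α| + sin(2π|α|)/(2π), 0)` form a Fourier transform pair. -/
theorem selberg_minorant_fourier_pair (α : ℝ) :
    ((max (1 - |α| + Real.sin (2 * Real.pi * |α|) / (2 * Real.pi)) 0 : ℝ) : ℂ) =
      ∫ u : ℝ,
        (((Real.sin (Real.pi * u) / (Real.pi * u)) ^ 2 * (1 / (1 - u ^ 2)) : ℝ) : ℂ) *
          Complex.exp (2 * Real.pi * Complex.I * α * u) := by
  change (selbergMinorantHat α : ℂ) =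
    ∫ u : ℝ, (selbergMinorant u : ℂ) * Complex.exp (2 * π * Complex.I * α * u)
  have hint : Integrable (𝓕 fun α ↦ (selbergMinorantHat α : ℂ)) :=
    integrable_selbergMinorant.ofReal.congr fourier_selbergMinorantHat_ae_eq.symm
  have hinv := (Complex.continuous_ofReal.comp' continuous_selbergMinorantHat).fourierInv_fourier_eq
    integrable_selbergMinorantHat.ofReal hint
  calc (selbergMinorantHat α : ℂ) = 𝓕⁻ (𝓕 fun α ↦ (selbergMinorantHat α : ℂ)) α := by
        rw [hinv]
    _ = 𝓕⁻ (fun u ↦ (selbergMinorant u : ℂ)) α :=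
        Real.fourierInv_congr_ae fourier_selbergMinorantHat_ae_eq α
    _ = ∫ u : ℝ, (selbergMinorant u : ℂ) * Complex.exp (2 * π * Complex.I * α * u) := by
        rw [Real.fourierInv_eq']
        congr 1 with u
        rw [smul_eq_mul, mul_comm, Real.inner_apply]
        push_cast
        ring_nf
end
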